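/- Let Z ∈ ℝ^{d×n} be partitioned into blocks Z₁,...,Z_k (n = ∑ n_j). Then ΔR(Z | Π) := R(Z) − ∑_j (n_j/n) R(Z_j) ≤ (1/(2n)) ∑_{j=1}^k ∑_p log[ (1 + (d/(nε²)) σ_p(Z_j)²)ⁿ / (1 + (d/(n_jε²)) σ_p(Z_j)²)^{n_j} ], with equality if and only if Z_jᵀZ_ℓ = 0 for all 1 ≤ j < ℓ ≤ k. -/

import Mathlib

open Matrix

noncomputable def codingRate {d : ℕ} {m : Type*} [Fintype m] (ε : ℝ)
    (Z : Matrix (Fin d) m ℝ) : ℝ :=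
  (1 / 2) * Real.log ((1 + ((d : ℝ) / (Fintype.card m * ε ^ 2)) • (Z * Zᵀ)).det)

noncomputable def sval {d n : ℕ} (A : Matrix (Fin d) (Fin n) ℝ) : Fin n → ℝ :=
  fun p => Real.sqrt ((Matrix.isHermitian_conjTranspose_mul_self A).eigenvalues
    (Tuple.sort ((Matrix.isHermitian_conjTranspose_mul_self A).eigenvalues) p.rev))

/-- The horizontal concatenation of a family of matrices `Z j : Matrix (Fin dz) (Fin (nj j)) ℝ`,
indexed by the sigma type of the column indices. -/
def blockConcat {dz k : ℕ} {nj : Fin k → ℕ}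
    (Z : (j : Fin k) → Matrix (Fin dz) (Fin (nj j)) ℝ) :
    Matrix (Fin dz) ((j : Fin k) × Fin (nj j)) ℝ :=
  Matrix.of fun i q => Z q.1 i q.2

/-!
By Sylvester's identity `det (1 + c Z Zᵀ) = det (1 + c Zᵀ Z)`, the coding rate of the concatenation
`W` is `½ log det M` with `M = 1 + α WᵀW`, `α = d / (n ε²)`, a positive definite matrix whose
`(j, ℓ)` block is `α Z_jᵀ Z_ℓ` off the diagonal and `1 + α Z_jᵀ Z_j` on it. Since
`det (1 + c Z_jᵀ Z_j) = ∏_p (1 + c σ_p(Z_j)²)`, the right-hand side minus the left-hand side is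
`½ (∑_j log det M_jj - log det M)`, so the theorem is Fischer's inequality
`det M ≤ ∏_j det M_jj` together with its equality case, `M` block diagonal. Fischer's inequality
follows by induction on the number of blocks from the case of two blocks, where the Schur
complement gives `det M = det A · det (D - BᵀA⁻¹B) ≤ det A · det D`, with equality iff `B = 0`.
-/

theorem Finset.prod_one_add_eq_one_iff_of_nonneg {ι R : Type*} [CommRing R] [LinearOrder R]
    [IsStrictOrderedRing R] {s : Finset ι} {f : ι → R} (hf : ∀ i ∈ s, 0 ≤ f i) :
    ∏ i ∈ s, (1 + f i) = 1 ↔ ∀ i ∈ s, f i = 0 := by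
  induction s using Finset.cons_induction with
  | empty => simp
  | cons a s ha ih =>
    simp only [Finset.prod_cons, Finset.forall_mem_cons] at hf ⊢
    have hP : 1 ≤ ∏ i ∈ s, (1 + f i) := Finset.one_le_prod fun i hi => by linarith [hf.2 i hi]
    rw [← ih hf.2]
    constructor
    · intro h
      constructor <;> nlinarith [hf.1]
    · rintro ⟨ha, hs⟩
      simp [ha, hs]

def Equiv.sigmaFinSucc {k : ℕ} (ι : Fin (k + 1) → Type*) :
    (Σ j, ι j) ≃ ι 0 ⊕ Σ j : Fin k, ι j.succ where
  toFun x := Fin.cases (motive := fun j => ι j → ι 0 ⊕ Σ j : Fin k, ι j.succ)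
    Sum.inl (fun j b => Sum.inr ⟨j, b⟩) x.1 x.2
  invFun := Sum.elim (Sigma.mk 0) (Sigma.map Fin.succ fun _ => id)
  left_inv := by rintro ⟨j, b⟩; induction j using Fin.cases <;> rfl
  right_inv := by rintro (b | ⟨j, b⟩) <;> rfl

namespace Matrix

variable {m : Type*} [Fintype m] [DecidableEq m]

theorem IsHermitian.det_one_add_smul {A : Matrix m m ℝ} (hA : A.IsHermitian) (c : ℝ) :
    (1 + c • A).det = ∏ i, (1 + c * hA.eigenvalues i) := by
  conv_lhs => rw [hA.spectral_theorem]
  rw [← map_smul, ← map_one (Unitary.conjStarAlgAut ℝ _ hA.eigenvectorUnitary), ← map_add,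
    Unitary.conjStarAlgAut_apply, det_mul, det_mul, mul_comm, ← mul_assoc, ← det_mul]
  simp [← diagonal_one, ← diagonal_smul, diagonal_add]

theorem PosSemidef.det_one_add_eq_prod {T : Matrix m m ℝ} (hT : T.PosSemidef) :
    (1 + T).det = ∏ i, (1 + hT.isHermitian.eigenvalues i) := by
  simpa using hT.isHermitian.det_one_add_smul 1

theorem PosSemidef.one_le_det_one_add {T : Matrix m m ℝ} (hT : T.PosSemidef) :
    1 ≤ (1 + T).det :=
  hT.det_one_add_eq_prod ▸
    Finset.one_le_prod fun i _ => le_add_of_nonneg_right (hT.eigenvalues_nonneg i)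

theorem PosSemidef.det_one_add_eq_one_iff {T : Matrix m m ℝ} (hT : T.PosSemidef) :
    (1 + T).det = 1 ↔ T = 0 := by
  rw [hT.det_one_add_eq_prod, ← hT.isHermitian.eigenvalues_eq_zero_iff, funext_iff,
    Finset.prod_one_add_eq_one_iff_of_nonneg fun i _ => hT.eigenvalues_nonneg i]
  simp

open scoped MatrixOrder in
theorem PosDef.det_le_det_add {X S : Matrix m m ℝ} (hX : X.PosDef) (hS : S.PosSemidef) :
    X.det ≤ (X + S).det ∧ ((X + S).det = X.det ↔ S = 0) := by
  obtain ⟨B, hB, rfl⟩ :=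
    CStarAlgebra.isStrictlyPositive_iff_eq_star_mul_self.mp hX.isStrictlyPositive
  replace hB := (isUnit_iff_isUnit_det B).mp hB
  set T := star B⁻¹ * S * B⁻¹
  have hT : T.PosSemidef := hS.conjTranspose_mul_mul_same B⁻¹
  have hST : S = star B * T * B := by
    simp only [T, ← mul_assoc, ← star_mul, nonsing_inv_mul _ hB, star_one, one_mul]
    rw [mul_assoc, nonsing_inv_mul _ hB, mul_one]
  have hdet : (star B * B + S).det = (star B * B).det * (1 + T).det := by
    rw [hST, show star B * B + star B * T * B = star B * (1 + T) * B by
      rw [mul_add, add_mul, mul_one], det_mul, det_mul, det_mul]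
    ring
  refine ⟨hdet ▸ le_mul_of_one_le_right hX.det_pos.le hT.one_le_det_one_add, ?_⟩
  rw [hdet, mul_eq_left₀ hX.det_pos.ne', hT.det_one_add_eq_one_iff]
  exact ⟨fun h => by simp [hST, h], fun h => by simp [T, h]⟩

open scoped MatrixOrder in
theorem PosDef.conjTranspose_mul_mul_same_eq_zero_iff {n : Type*} [Fintype n]
    {A : Matrix m m ℝ} (hA : A.PosDef) (B : Matrix m n ℝ) : Bᴴ * A * B = 0 ↔ B = 0 := by
  obtain ⟨C, hC, rfl⟩ :=
    CStarAlgebra.isStrictlyPositive_iff_eq_star_mul_self.mp hA.isStrictlyPositive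
  rw [show Bᴴ * (star C * C) * B = (C * B)ᴴ * (C * B) by
    simp only [conjTranspose_mul, star_eq_conjTranspose, Matrix.mul_assoc],
    conjTranspose_mul_self_eq_zero]
  refine ⟨fun h => ?_, fun h => by rw [h, Matrix.mul_zero]⟩
  simpa [← Matrix.mul_assoc, nonsing_inv_mul _ ((isUnit_iff_isUnit_det C).mp hC)]
    using congrArg (C⁻¹ * ·) h

theorem PosDef.det_le_det_toBlocks₁₁_mul_det_toBlocks₂₂ {α β : Type*} [Fintype α] [Fintype β]
    [DecidableEq α] [DecidableEq β] {N : Matrix (α ⊕ β) (α ⊕ β) ℝ} (hN : N.PosDef) :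
    N.det ≤ N.toBlocks₁₁.det * N.toBlocks₂₂.det ∧
      (N.det = N.toBlocks₁₁.det * N.toBlocks₂₂.det ↔ N.toBlocks₁₂ = 0) := by
  set A := N.toBlocks₁₁
  set B := N.toBlocks₁₂
  set D := N.toBlocks₂₂
  have hA : A.PosDef := hN.submatrix Sum.inl_injective
  have hN_eq : N = fromBlocks A B Bᴴ D := by
    conv_lhs => rw [← fromBlocks_toBlocks N]
    rw [(isHermitian_fromBlocks_iff.mp ((fromBlocks_toBlocks N).symm ▸ hN.isHermitian)).2.1]
  have := invertibleOfIsUnitDet A (isUnit_iff_ne_zero.mpr hA.det_pos.ne')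
  set S := Bᴴ * A⁻¹ * B
  have hS : S.PosSemidef := hA.inv.posSemidef.conjTranspose_mul_mul_same B
  have hdet : N.det = A.det * (D - S).det := by
    rw [hN_eq, det_fromBlocks₁₁, invOf_eq_nonsing_inv]
  have hX : (D - S).PosDef :=
    ((PosDef.fromBlocks₁₁ B D hA).mp (hN_eq ▸ hN.posSemidef)).posDef_iff_det_ne_zero.mpr
      (right_ne_zero_of_mul (hdet ▸ hN.det_pos.ne'))
  obtain ⟨hle, heq⟩ := hX.det_le_det_add hS
  rw [sub_add_cancel] at hle heq
  rw [hdet, ← hA.inv.conjTranspose_mul_mul_same_eq_zero_iff, mul_right_inj' hA.det_pos.ne',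
    eq_comm, heq]
  exact ⟨mul_le_mul_of_nonneg_left hle hA.det_pos.le, Iff.rfl⟩

theorem PosDef.det_le_prod_det_diagBlock {k : ℕ} {ι : Fin k → Type*} [∀ j, Fintype (ι j)]
    [∀ j, DecidableEq (ι j)] {M : Matrix (Σ j, ι j) (Σ j, ι j) ℝ} (hM : M.PosDef) :
    M.det ≤ ∏ j, (M.submatrix (Sigma.mk j) (Sigma.mk j)).det ∧
      (M.det = ∏ j, (M.submatrix (Sigma.mk j) (Sigma.mk j)).det ↔
        ∀ j ℓ, j < ℓ → M.submatrix (Sigma.mk j) (Sigma.mk ℓ) = 0) := by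
  induction k with
  | zero => simp [det_isEmpty]
  | succ k ih =>
    set N := M.submatrix (Equiv.sigmaFinSucc ι).symm (Equiv.sigmaFinSucc ι).symm
    have hN : N.PosDef := hM.submatrix (Equiv.sigmaFinSucc ι).symm.injective
    have hA : 0 < N.toBlocks₁₁.det := (hN.submatrix Sum.inl_injective).det_pos
    obtain ⟨hle₁, heq₁⟩ := hN.det_le_det_toBlocks₁₁_mul_det_toBlocks₂₂
    obtain ⟨hle₂, heq₂⟩ := ih (hN.submatrix Sum.inr_injective)
    replace hle₂ : N.toBlocks₂₂.det ≤
        ∏ j : Fin k, (M.submatrix (Sigma.mk j.succ) (Sigma.mk j.succ)).det := hle₂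
    replace heq₂ : N.toBlocks₂₂.det =
          ∏ j : Fin k, (M.submatrix (Sigma.mk j.succ) (Sigma.mk j.succ)).det ↔
        ∀ j ℓ : Fin k, j < ℓ → M.submatrix (Sigma.mk j.succ) (Sigma.mk ℓ.succ) = 0 := heq₂
    have hB : N.toBlocks₁₂ = 0 ↔ ∀ ℓ : Fin k, M.submatrix (Sigma.mk 0) (Sigma.mk ℓ.succ) = 0 := by
      simp only [← Matrix.ext_iff, Sigma.forall]
      exact ⟨fun h ℓ a b => h a ℓ b, fun h a ℓ b => h ℓ a b⟩
    have hmono := mul_le_mul_of_nonneg_left hle₂ hA.le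
    rw [Fin.prod_univ_succ, ← det_submatrix_equiv_self (Equiv.sigmaFinSucc ι).symm M]
    simp only [Fin.forall_fin_succ, Fin.succ_lt_succ_iff, Fin.succ_pos, Fin.not_lt_zero,
      false_imp_iff, true_imp_iff, true_and, ← hB, ← heq₁, ← heq₂]
    refine ⟨hle₁.trans hmono, fun h => ?_, fun ⟨h₁, h₂⟩ => h₂ ▸ h₁⟩
    have h₂ := mul_left_cancel₀ hA.ne' (le_antisymm hmono (h ▸ hle₁))
    exact ⟨h₂ ▸ h, h₂⟩

end Matrix

theorem codingRate_eq_half_log_det_gram {d : ℕ} {m : Type*} [Fintype m] [DecidableEq m]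
    (ε : ℝ) (Z : Matrix (Fin d) m ℝ) :
    codingRate ε Z =
      1 / 2 * Real.log (1 + ((d : ℝ) / (Fintype.card m * ε ^ 2)) • (Zᵀ * Z)).det := by
  rw [codingRate, ← Matrix.smul_mul, det_one_add_mul_comm, Matrix.mul_smul]

theorem log_det_one_add_smul_gram {d n : ℕ} (A : Matrix (Fin d) (Fin n) ℝ) {c : ℝ}
    (hc : 0 ≤ c) : Real.log (1 + c • (Aᵀ * A)).det = ∑ p, Real.log (1 + c * sval A p ^ 2) := by
  have hA := isHermitian_conjTranspose_mul_self A
  rw [← conjTranspose_eq_transpose_of_trivial, hA.det_one_add_smul c,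
    ← Fintype.prod_equiv (Fin.revPerm.trans (Tuple.sort hA.eigenvalues))
      (fun p => 1 + c * sval A p ^ 2) _ fun p => ?_, Real.log_prod fun p _ => by positivity]
  rw [sval, Real.sq_sqrt (eigenvalues_conjTranspose_mul_self_nonneg A _)]
  rfl

theorem sum_log_sval_pow_div_pow {d n : ℕ} (A : Matrix (Fin d) (Fin n) ℝ) {c c' : ℝ}
    (hc : 0 ≤ c) (hc' : 0 ≤ c') (a b : ℕ) :
    ∑ p, Real.log ((1 + c * sval A p ^ 2) ^ a / (1 + c' * sval A p ^ 2) ^ b) =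
      a * Real.log (1 + c • (Aᵀ * A)).det - b * Real.log (1 + c' • (Aᵀ * A)).det := by
  rw [log_det_one_add_smul_gram A hc, log_det_one_add_smul_gram A hc', Finset.mul_sum,
    Finset.mul_sum, ← Finset.sum_sub_distrib]
  refine Finset.sum_congr rfl fun p _ => ?_
  rw [Real.log_div (by positivity) (by positivity), Real.log_pow, Real.log_pow]

section blockConcat

variable {d k : ℕ} {nj : Fin k → ℕ} (Z : (j : Fin k) → Matrix (Fin d) (Fin (nj j)) ℝ)

theorem codingRate_blockConcat {n : ℕ} (hn : n = ∑ j, nj j) (ε : ℝ) :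
    codingRate ε (blockConcat Z) = 1 / 2 *
      Real.log (1 + ((d : ℝ) / (n * ε ^ 2)) • ((blockConcat Z)ᵀ * blockConcat Z)).det := by
  rw [codingRate_eq_half_log_det_gram, Fintype.card_sigma]
  simp [hn]

theorem log_det_one_add_smul_gram_blockConcat_le {c : ℝ} (hc : 0 ≤ c) :
    Real.log (1 + c • ((blockConcat Z)ᵀ * blockConcat Z)).det ≤
        ∑ j, Real.log (1 + c • ((Z j)ᵀ * Z j)).det ∧
      (Real.log (1 + c • ((blockConcat Z)ᵀ * blockConcat Z)).det =
          ∑ j, Real.log (1 + c • ((Z j)ᵀ * Z j)).det ↔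
        ∀ j ℓ, j < ℓ → c • ((Z j)ᵀ * Z ℓ) = 0) := by
  set M := 1 + c • ((blockConcat Z)ᵀ * blockConcat Z)
  have hM : M.PosDef := PosDef.one.add_posSemidef
    ((conjTranspose_eq_transpose_of_trivial (blockConcat Z) ▸
      posSemidef_conjTranspose_mul_self (blockConcat Z)).smul hc)
  have hdiag : ∀ j, M.submatrix (Sigma.mk j) (Sigma.mk j) = 1 + c • ((Z j)ᵀ * Z j) :=
    fun j => by ext a b; simp [M, one_apply, blockConcat, Matrix.mul_apply]
  have hoff : ∀ j ℓ, j ≠ ℓ → M.submatrix (Sigma.mk j) (Sigma.mk ℓ) = c • ((Z j)ᵀ * Z ℓ) :=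
    fun j ℓ h => by ext a b; simp [M, one_apply, blockConcat, Matrix.mul_apply, h]
  have hpos : 0 < ∏ j, (M.submatrix (Sigma.mk j) (Sigma.mk j)).det :=
    Finset.prod_pos fun j _ => (hM.submatrix sigma_mk_injective).det_pos
  obtain ⟨hle, heq⟩ := hM.det_le_prod_det_diagBlock
  simp only [← hdiag]
  rw [← Real.log_prod fun j _ => (hM.submatrix sigma_mk_injective).det_pos.ne',
    Real.log_le_log_iff hM.det_pos hpos, Real.log_injOn_pos.eq_iff hM.det_pos hpos, heq]
  exact ⟨hle, forall₂_congr fun j ℓ => imp_congr_right fun h => by rw [hoff j ℓ h.ne]⟩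

end blockConcat

theorem stmt13_general {d k n : ℕ} (ε : ℝ) (hε : 0 < ε) (nj : Fin k → ℕ)
    (hn : n = ∑ j, nj j)
    (Z : (j : Fin k) → Matrix (Fin d) (Fin (nj j)) ℝ) :
    codingRate ε (blockConcat Z) - ∑ j, ((nj j : ℝ) / (n : ℝ)) * codingRate ε (Z j)
        ≤ (1 / (2 * (n : ℝ))) * ∑ j, ∑ p : Fin (nj j),
            Real.log ((1 + ((d : ℝ) / (n * ε ^ 2)) * (sval (Z j) p) ^ 2) ^ n
              / (1 + ((d : ℝ) / (nj j * ε ^ 2)) * (sval (Z j) p) ^ 2) ^ (nj j)) ∧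
    (codingRate ε (blockConcat Z) - ∑ j, ((nj j : ℝ) / (n : ℝ)) * codingRate ε (Z j)
        = (1 / (2 * (n : ℝ))) * ∑ j, ∑ p : Fin (nj j),
            Real.log ((1 + ((d : ℝ) / (n * ε ^ 2)) * (sval (Z j) p) ^ 2) ^ n
              / (1 + ((d : ℝ) / (nj j * ε ^ 2)) * (sval (Z j) p) ^ 2) ^ (nj j))
      ↔ ∀ j ℓ : Fin k, j < ℓ → (Z j)ᵀ * (Z ℓ) = 0) := by
  rcases Nat.eq_zero_or_pos n with rfl | hn₀
  · have h₀ : ∀ j, nj j = 0 := by simpa [eq_comm, Finset.sum_eq_zero_iff] using hn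
    have hcond : ∀ j ℓ : Fin k, j < ℓ → (Z j)ᵀ * Z ℓ = 0 := fun j _ _ => by
      ext a; exact absurd a.isLt (by simp [h₀ j])
    simpa [codingRate_blockConcat Z hn] using hcond
  set α : ℝ := d / (n * ε ^ 2)
  have hα : 0 ≤ α := by positivity
  have hRHS : (1 / (2 * (n : ℝ))) * ∑ j, ∑ p : Fin (nj j),
        Real.log ((1 + α * (sval (Z j) p) ^ 2) ^ n
          / (1 + ((d : ℝ) / (nj j * ε ^ 2)) * (sval (Z j) p) ^ 2) ^ (nj j)) =
      1 / 2 * ∑ j, Real.log (1 + α • ((Z j)ᵀ * Z j)).det -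
        ∑ j, ((nj j : ℝ) / (n : ℝ)) * codingRate ε (Z j) := by
    rw [Finset.mul_sum, Finset.mul_sum, ← Finset.sum_sub_distrib]
    refine Finset.sum_congr rfl fun j _ => ?_
    rw [sum_log_sval_pow_div_pow _ hα (by positivity), codingRate_eq_half_log_det_gram,
      Fintype.card_fin]
    field_simp
  have hcond : ∀ j ℓ : Fin k, α • ((Z j)ᵀ * Z ℓ) = 0 ↔ (Z j)ᵀ * Z ℓ = 0 := fun j ℓ => by
    refine smul_eq_zero.trans (or_iff_right_of_imp fun hα₀ => ?_)
    obtain rfl : d = 0 := by simpa [α, hn₀.ne', hε.ne'] using hα₀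
    ext a b; simp [Matrix.mul_apply]
  obtain ⟨hle, heq⟩ := log_det_one_add_smul_gram_blockConcat_le Z hα
  simp only [hcond] at heq
  rw [hRHS, codingRate_blockConcat Z hn, ← heq]
  exact ⟨by linarith, by constructor <;> intro <;> linarith⟩

/-- Rate reduction upper bound in terms of block singular values, with equality iff the
blocks are pairwise orthogonal. -/
theorem stmt13 {d k n : ℕ} (ε : ℝ) (hε : 0 < ε) (nj : Fin k → ℕ)
    (hnj : ∀ j, 0 < nj j) (hn : n = ∑ j, nj j)
    (Z : (j : Fin k) → Matrix (Fin d) (Fin (nj j)) ℝ) :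
    codingRate ε (blockConcat Z) - ∑ j, ((nj j : ℝ) / (n : ℝ)) * codingRate ε (Z j)
        ≤ (1 / (2 * (n : ℝ))) * ∑ j, ∑ p : Fin (nj j),
            Real.log ((1 + ((d : ℝ) / (n * ε ^ 2)) * (sval (Z j) p) ^ 2) ^ n
              / (1 + ((d : ℝ) / (nj j * ε ^ 2)) * (sval (Z j) p) ^ 2) ^ (nj j)) ∧
    (codingRate ε (blockConcat Z) - ∑ j, ((nj j : ℝ) / (n : ℝ)) * codingRate ε (Z j)
        = (1 / (2 * (n : ℝ))) * ∑ j, ∑ p : Fin (nj j),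
            Real.log ((1 + ((d : ℝ) / (n * ε ^ 2)) * (sval (Z j) p) ^ 2) ^ n
              / (1 + ((d : ℝ) / (nj j * ε ^ 2)) * (sval (Z j) p) ^ 2) ^ (nj j))
      ↔ ∀ j ℓ : Fin k, j < ℓ → (Z j)ᵀ * (Z ℓ) = 0) :=
  stmt13_general ε hε nj hn Z
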